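/- arXiv:2601.13280 — 2 statements merged into one kernel-verified Lean document; each statement's English description precedes it below -/
import Mathlib

section
/- Let E be a finite-dimensional real normed vector space, F a real normed vector space, f : E → F a C¹ function, and X ⊆ E a nonempty compact set with f(x) = 0 for all x ∈ X. Then for every compact set U ⊆ E there exists a constant C > 0 such that ‖f(p)‖ ≤ C · infDist(p, X) for all p ∈ U. -/
/-!
By the mean value inequality on a closed ball containing `U` and `X`, `‖f p‖ = ‖f p - f x‖` is
at most `C * dist p x` for every `x ∈ X`, where `C` bounds `‖Df‖` on that ball (it exists since
`Df` is continuous and the ball is compact); taking the infimum over `x ∈ X` gives the claim.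
-/

open Metric

lemma Metric.le_mul_infDist_of_forall_le_mul_dist {α : Type*} [PseudoMetricSpace α]
    {s : Set α} {x : α} {a C : ℝ} (hC : 0 ≤ C) (hs : s.Nonempty)
    (h : ∀ y ∈ s, a ≤ C * dist x y) : a ≤ C * infDist x s := by
  have : Nonempty s := hs.to_subtype
  rw [infDist_eq_iInf, Real.mul_iInf_of_nonneg hC]
  exact le_ciInf fun y => h y y.2

theorem Convex.norm_image_le_mul_infDist_of_norm_hasFDerivWithin_le
    {E F : Type*} [NormedAddCommGroup E] [NormedSpace ℝ E]
    [NormedAddCommGroup F] [NormedSpace ℝ F]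
    {f : E → F} {f' : E → E →L[ℝ] F} {s X : Set E} {C : ℝ} (hs : Convex ℝ s)
    (hf : ∀ x ∈ s, HasFDerivWithinAt f (f' x) s x) (bound : ∀ x ∈ s, ‖f' x‖ ≤ C)
    (hXs : X ⊆ s) (hX : X.Nonempty) (hfX : ∀ x ∈ X, f x = 0) {p : E} (hp : p ∈ s) :
    ‖f p‖ ≤ C * infDist p X := by
  obtain ⟨x₀, hx₀⟩ := hX
  have hC : 0 ≤ C := (norm_nonneg _).trans (bound x₀ (hXs hx₀))
  refine le_mul_infDist_of_forall_le_mul_dist hC ⟨x₀, hx₀⟩ fun x hx => ?_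
  have := hs.norm_image_sub_le_of_norm_hasFDerivWithin_le hf bound (hXs hx) hp
  rwa [hfX x hx, sub_zero, ← dist_eq_norm] at this

/-- A `C¹` function vanishing on a nonempty compact set `X` in a
finite-dimensional space is bounded by a constant multiple of the distance to
`X` on every compact set. -/
theorem norm_le_const_mul_infDist_of_contDiff
    {E F : Type*} [NormedAddCommGroup E] [NormedSpace ℝ E] [FiniteDimensional ℝ E]
    [NormedAddCommGroup F] [NormedSpace ℝ F]
    (f : E → F) (hf : ContDiff ℝ 1 f)
    (X : Set E) (hX : X.Nonempty) (hXcpt : IsCompact X)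
    (hfX : ∀ x ∈ X, f x = 0)
    (U : Set E) (hU : IsCompact U) :
    ∃ C : ℝ, 0 < C ∧ ∀ p ∈ U, ‖f p‖ ≤ C * Metric.infDist p X := by
  obtain ⟨R, hR⟩ := (hU.union hXcpt).isBounded.subset_closedBall 0
  obtain ⟨C, hC⟩ := (isCompact_closedBall (0 : E) R).exists_bound_of_continuousOn
    (hf.continuous_fderiv one_ne_zero).continuousOn
  refine ⟨max C 1, by positivity, fun p hp => ?_⟩
  exact (convex_closedBall 0 R).norm_image_le_mul_infDist_of_norm_hasFDerivWithin_le
    (fun x _ => (hf.differentiable one_ne_zero x).hasFDerivAt.hasFDerivWithinAt)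
    (fun x hx => (hC x hx).trans (le_max_left C 1))
    (Set.subset_union_right.trans hR) hX hfX (hR (Set.subset_union_left hp))
end

section
/- Let E be a real Hilbert space and let D ⊆ Ω be nonempty closed convex subsets of E, with nearest-point projections π_D and π_Ω. Let p ∈ E with p ∉ Ω, and let λ ≥ 0. Then ‖λ • (‖p − π_D(p)‖⁻¹ • (p − π_D(p))) + 2 • (p − π_Ω(p))‖ ≥ 2 · infDist(p, Ω). -/
/-!
Since `πD p ∈ D ⊆ Ω`, the variational inequality characterising `πΩ p` gives
`⟪p - πΩ p, p - πD p⟫ ≥ 0`. Hence the two summands have nonnegative inner product, so the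
norm of their sum dominates the norm `2 ‖p - πΩ p‖ = 2 infDist p Ω` of the second one.
-/

open RealInnerProductSpace

section

variable {F : Type*} [NormedAddCommGroup F] [InnerProductSpace ℝ F]

theorem norm_le_norm_add_of_real_inner_nonneg {a b : F} (h : 0 ≤ ⟪a, b⟫) :
    ‖b‖ ≤ ‖a + b‖ := by
  have hsq : ‖b‖ ^ 2 ≤ ‖a + b‖ ^ 2 := by
    rw [norm_add_sq_real]
    linarith [sq_nonneg ‖a‖]
  exact (pow_le_pow_iff_left₀ (norm_nonneg _) (norm_nonneg _) two_ne_zero).mp hsq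

theorem real_inner_sub_nonneg_of_dist_eq_infDist {K : Set F} (hK : Convex ℝ K) {p u w : F}
    (hu : u ∈ K) (hdist : dist p u = Metric.infDist p K) (hw : w ∈ K) :
    0 ≤ ⟪p - u, p - w⟫ := by
  have hmin : ‖p - u‖ = ⨅ v : K, ‖p - v‖ := by
    simpa only [dist_eq_norm, Metric.infDist_eq_iInf] using hdist
  have hvar : ⟪p - u, w - u⟫ ≤ 0 := (norm_eq_iInf_iff_real_inner_le_zero hK hu).mp hmin w hw
  have hsplit : ⟪p - u, p - w⟫ = ‖p - u‖ ^ 2 - ⟪p - u, w - u⟫ := by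
    rw [← real_inner_self_eq_norm_sq, ← inner_sub_right, sub_sub_sub_cancel_right]
  rw [hsplit]
  linarith [sq_nonneg ‖p - u‖]

end

theorem norm_grad_combination_ge_general
    {E : Type*} [NormedAddCommGroup E] [InnerProductSpace ℝ E]
    (D Ω : Set E) (hΩconv : Convex ℝ Ω)
    (hDΩ : D ⊆ Ω)
    (πD πΩ : E → E)
    (hπD : ∀ p, πD p ∈ D ∧ dist p (πD p) = Metric.infDist p D)
    (hπΩ : ∀ p, πΩ p ∈ Ω ∧ dist p (πΩ p) = Metric.infDist p Ω)
    (p : E) (lam : ℝ) (hlam : 0 ≤ lam) :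
    2 * Metric.infDist p Ω ≤
      ‖lam • (‖p - πD p‖⁻¹ • (p - πD p)) + (2 : ℝ) • (p - πΩ p)‖ := by
  obtain ⟨hπΩmem, hπΩdist⟩ := hπΩ p
  have hangle : 0 ≤ ⟪p - πΩ p, p - πD p⟫ :=
    real_inner_sub_nonneg_of_dist_eq_infDist hΩconv hπΩmem hπΩdist (hDΩ (hπD p).1)
  have hinner : 0 ≤ ⟪lam • (‖p - πD p‖⁻¹ • (p - πD p)), (2 : ℝ) • (p - πΩ p)⟫ := by
    rw [real_inner_smul_left, real_inner_smul_left, real_inner_smul_right, real_inner_comm]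
    positivity
  calc 2 * Metric.infDist p Ω = ‖(2 : ℝ) • (p - πΩ p)‖ := by
        rw [norm_smul, ← dist_eq_norm, hπΩdist, Real.norm_two]
    _ ≤ _ := norm_le_norm_add_of_real_inner_nonneg hinner

/-- The gradient lower bound `|∇u^λ| ≥ 2 d_Ω` for `u^λ = λ d_D + d_Ω²` in a
real Hilbert space, for nested nonempty closed convex sets `D ⊆ Ω`, a point
`p ∉ Ω`, and `λ ≥ 0`. -/
theorem norm_grad_combination_ge
    {E : Type*} [NormedAddCommGroup E] [InnerProductSpace ℝ E] [CompleteSpace E]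
    (D Ω : Set E) (hD : D.Nonempty) (hDc : IsClosed D) (hDconv : Convex ℝ D)
    (hΩ : Ω.Nonempty) (hΩc : IsClosed Ω) (hΩconv : Convex ℝ Ω)
    (hDΩ : D ⊆ Ω)
    (πD πΩ : E → E)
    (hπD : ∀ p, πD p ∈ D ∧ dist p (πD p) = Metric.infDist p D)
    (hπΩ : ∀ p, πΩ p ∈ Ω ∧ dist p (πΩ p) = Metric.infDist p Ω)
    (p : E) (hp : p ∉ Ω) (lam : ℝ) (hlam : 0 ≤ lam) :
    2 * Metric.infDist p Ω ≤
      ‖lam • (‖p - πD p‖⁻¹ • (p - πD p)) + (2 : ℝ) • (p - πΩ p)‖ :=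
  norm_grad_combination_ge_general D Ω hΩconv hDΩ πD πΩ hπD hπΩ p lam hlam
end
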